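/- arXiv:1709.02407 — 2 statements merged into one kernel-verified Lean document; each statement's English description precedes it below -/
import Mathlib

section
/- Let α₀, β₀ ∈ ℂ with |α₀|² + |β₀|² = 1 and set A = (α₀, β₀) ∈ ℂ². For every real t, U_qs(t) · (A ⊗ (1,0) ⊗ (0,1)) = ψ(t) ⊗ (0,1), where ψ(t) ∈ ℂ⁴ is the two-qubit vector with components ψ(t)₀ = α₀, ψ(t)₁ = −i·sin(t)·β₀, ψ(t)₂ = cos(t)·β₀, ψ(t)₃ = 0, and the remaining tensor factor (0,1) sits on the third qubit. -/
open Matrix Complex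

/-- The Hamiltonian of the quantum qubit switch: the 8×8 complex matrix whose only
nonzero entries are `(H_qs)_{3,5} = (H_qs)_{5,3} = 1`. -/
noncomputable def Hqs : Matrix (Fin 8) (Fin 8) ℂ :=
  Matrix.of fun i j =>
    if (i = 3 ∧ j = 5) ∨ (i = 5 ∧ j = 3) then 1 else 0

/-- The time-evolution operator `U_qs(t) = exp(−i t H_qs)` (matrix exponential). -/
noncomputable def Uqs (t : ℝ) : Matrix (Fin 8) (Fin 8) ℂ :=
  NormedSpace.exp ((-(Complex.I * (t : ℂ))) • Hqs)

/-- Kronecker (tensor) product of three qubit vectors: the (4a+2b+c)-th component of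
`A ⊗ B ⊗ C` is `A_a · B_b · C_c`. -/
def tensor3 (A B C : Fin 2 → ℂ) : Fin 8 → ℂ := fun i =>
  A ⟨i.val / 4, by omega⟩ * B ⟨i.val / 2 % 2, by omega⟩ * C ⟨i.val % 2, by omega⟩

/-- Kronecker product of a two-qubit vector (ℂ⁴) with a qubit vector (ℂ²): the
(4a+2b+c)-th component of `ψ ⊗ C` is `ψ_{2a+b} · C_c`. -/
def tensor42 (ψ : Fin 4 → ℂ) (C : Fin 2 → ℂ) : Fin 8 → ℂ := fun i =>
  ψ ⟨i.val / 2, by omega⟩ * C ⟨i.val % 2, by omega⟩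

/-!
`H_qs` swaps the basis vectors `|011⟩` and `|101⟩` and kills the others, so `H_qs ^ 3 = H_qs`.
For such a tripotent the exponential series collapses:
`exp (z • H) = 1 + (cosh z - 1) • H ^ 2 + sinh z • H`, hence
`U_qs t = 1 + (cos t - 1) • H_qs ^ 2 - (i sin t) • H_qs`, where `H_qs ^ 2` projects onto
`span {|011⟩, |101⟩}`. The input state has `α₀` at `|001⟩`, which is fixed, and `β₀` at `|101⟩`,
which is rotated into `cos t · |101⟩ - i sin t · |011⟩`.
-/

open NormedSpace
open scoped Nat

section Tripotent

variable {M : Type*} [Monoid M] {a : M}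

theorem pow_odd_of_pow_three_eq (ha : a ^ 3 = a) (k : ℕ) : a ^ (2 * k + 1) = a := by
  induction k with
  | zero => simp
  | succ k ih => rw [show 2 * (k + 1) + 1 = 2 * k + 1 + 2 by ring, pow_add, ih, ← pow_succ', ha]

theorem pow_even_of_pow_three_eq (ha : a ^ 3 = a) {k : ℕ} (hk : k ≠ 0) : a ^ (2 * k) = a ^ 2 := by
  obtain ⟨k, rfl⟩ := Nat.exists_eq_succ_of_ne_zero hk
  rw [show 2 * (k + 1) = 2 * k + 1 + 1 by ring, pow_succ, pow_odd_of_pow_three_eq ha, sq]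

end Tripotent

theorem exp_smul_of_pow_three_eq {𝔸 : Type*} [NormedRing 𝔸] [NormedAlgebra ℂ 𝔸]
    [CompleteSpace 𝔸] {a : 𝔸} (ha : a ^ 3 = a) (z : ℂ) :
    exp (z • a) = 1 + (cosh z - 1) • a ^ 2 + sinh z • a := by
  have hsum : HasSum (fun n => (n ! : ℂ)⁻¹ • (z • a) ^ n)
      (cosh z • a ^ 2 + (1 - a ^ 2) + sinh z • a) := by
    refine HasSum.even_add_odd ?_ ?_
    · -- the `k = 0` term is `1`, not `a ^ 2`
      refine ((hasSum_cosh z).smul_const (a ^ 2)).add (hasSum_ite_eq 0 (1 - a ^ 2))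
        |>.congr_fun fun k => ?_
      rcases eq_or_ne k 0 with rfl | hk
      · simp
      · simp [smul_pow, pow_even_of_pow_three_eq ha hk, hk, smul_smul, div_eq_inv_mul]
    · refine ((hasSum_sinh z).smul_const a).congr_fun fun k => ?_
      simp [smul_pow, pow_odd_of_pow_three_eq ha, smul_smul, div_eq_inv_mul]
  rw [(exp_series_hasSum_exp' (z • a)).unique hsum, sub_smul, one_smul]
  abel

namespace Matrix

variable {n α : Type*} [Fintype n] [DecidableEq n]

theorem single_add_single_pow_three [Semiring α] {i j : n} (hij : i ≠ j) :
    (single i j (1 : α) + single j i 1) ^ 3 = single i j 1 + single j i 1 := by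
  simp [pow_succ, add_mul, mul_add, hij, hij.symm]

theorem single_add_single_mulVec [NonAssocSemiring α] (i j : n) (v : n → α) :
    (single i j (1 : α) + single j i 1) *ᵥ v = Pi.single i (v j) + Pi.single j (v i) := by
  ext k
  simp [add_mulVec, single_mulVec, Pi.single_apply, Function.update_apply]

end Matrix

theorem Hqs_eq_single_add_single : Hqs = single 3 5 1 + single 5 3 1 := by
  ext i j
  simp only [Hqs, of_apply, Matrix.add_apply, single_apply]
  fin_cases i <;> fin_cases j <;> simp

theorem Uqs_eq (t : ℝ) : Uqs t = 1 + (cos t - 1) • Hqs ^ 2 - (I * sin t) • Hqs := by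
  -- matrices carry no global norm; any submultiplicative one will do
  let _ := Matrix.linftyOpNormedRing (n := Fin 8) (α := ℂ)
  let _ := Matrix.linftyOpNormedAlgebra (n := Fin 8) (R := ℂ) (α := ℂ)
  have h3 : Hqs ^ 3 = Hqs := by
    rw [Hqs_eq_single_add_single]
    exact single_add_single_pow_three (by decide)
  refine (exp_smul_of_pow_three_eq h3 _).trans ?_
  rw [cosh_neg, sinh_neg, mul_comm, cosh_mul_I, sinh_mul_I, mul_comm (sin _), neg_smul,
    ← sub_eq_add_neg]

theorem switch_on_A01_general (α₀ β₀ : ℂ)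
    (t : ℝ) :
    (Uqs t).mulVec (tensor3 ![α₀, β₀] ![1, 0] ![0, 1]) =
      tensor42 ![α₀, -Complex.I * (Real.sin t : ℂ) * β₀, (Real.cos t : ℂ) * β₀, 0]
        ![0, 1] := by
  rw [Uqs_eq, sub_mulVec, add_mulVec, one_mulVec, smul_mulVec, smul_mulVec, pow_two,
    ← mulVec_mulVec, Hqs_eq_single_add_single, single_add_single_mulVec,
    single_add_single_mulVec]
  ext i
  fin_cases i <;> simp [tensor3, tensor42, sub_mul]

/-- Acting on |A01⟩ (control qubit |1⟩), the switch at time t produces the two-qubit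
state ψ(t) = (α₀, −i sin(t) β₀, cos(t) β₀, 0) on the first two qubits, tensored with
|1⟩ on the third qubit. -/
theorem switch_on_A01 (α₀ β₀ : ℂ) (hnorm : ‖α₀‖ ^ 2 + ‖β₀‖ ^ 2 = 1)
    (t : ℝ) :
    (Uqs t).mulVec (tensor3 ![α₀, β₀] ![1, 0] ![0, 1]) =
      tensor42 ![α₀, -Complex.I * (Real.sin t : ℂ) * β₀, (Real.cos t : ℂ) * β₀, 0]
        ![0, 1] :=
  switch_on_A01_general α₀ β₀ t
end

section
/- Let α₀, β₀ ∈ ℂ with |α₀|² + |β₀|² = 1, t ∈ ℝ, p ∈ [0,1], and let ρ'_A := p·ρ_A(t) + (1−p)·σ_z ρ_A(t) σ_z be the result of the Phase Flip channel acting on ρ_A(t). Then 2(1 − tr(ρ'_A²)) = 2 − 4(1−2p)²·|α₀|²·cos²(t)·|β₀|² − 2(|α₀|² + sin²(t)|β₀|²)² − 2cos⁴(t)|β₀|⁴; i.e. the squared I-Concurrence of the switch state under Phase Flip noise on the first qubit equals this expression. -/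
open Matrix Complex

/-- The two-qubit state of the switch at time t:
ψ(t) = (α₀, −i sin(t) β₀, cos(t) β₀, 0). -/
noncomputable def ψ (α₀ β₀ : ℂ) (t : ℝ) : Fin 4 → ℂ :=
  ![α₀, -Complex.I * (Real.sin t : ℂ) * β₀, (Real.cos t : ℂ) * β₀, 0]

/-- The density matrix ρ(t) = ψ(t)ψ(t)†. -/
noncomputable def ρ (α₀ β₀ : ℂ) (t : ℝ) : Matrix (Fin 4) (Fin 4) ℂ :=
  vecMulVec (ψ α₀ β₀ t) (star (ψ α₀ β₀ t))

/-- The reduced density matrix on the first qubit (partial trace over the second):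
`(ρ_A)_{i,j} = Σ_k ρ_{2i+k, 2j+k}`. -/
noncomputable def ρA (α₀ β₀ : ℂ) (t : ℝ) : Matrix (Fin 2) (Fin 2) ℂ :=
  Matrix.of fun i j => ∑ k : Fin 2,
    ρ α₀ β₀ t ⟨2 * i.val + k.val, by omega⟩ ⟨2 * j.val + k.val, by omega⟩

/-- The Pauli Z matrix. -/
def σz : Matrix (Fin 2) (Fin 2) ℂ := !![1, 0; 0, -1]

open scoped ComplexConjugate

/-!
Conjugation by `σz` negates the off-diagonal entries of a qubit matrix, so the phase flip channel
keeps the diagonal of `ρ_A` and multiplies its off-diagonal entries by `2p - 1`. Since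
`tr(M²) = a² + d² + 2bc` for `M = !![a, b; c, d]`, only the product of the off-diagonal
entries of `ρ_A`, namely `|α₀|² cos² t |β₀|²`, picks up the factor `(2p - 1)²`.
-/

lemma trace_mul_self_fin_two {R : Type*} [CommRing R] (a b c d : R) :
    (!![a, b; c, d] * !![a, b; c, d]).trace = a ^ 2 + 2 * (b * c) + d ^ 2 := by
  rw [mul_fin_two, trace_fin_two_of]
  ring

lemma σz_mul_mul_σz (a b c d : ℂ) : σz * !![a, b; c, d] * σz = !![a, -b; -c, d] := by
  simp [σz]

lemma phase_flip_fin_two (p a b c d : ℂ) :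
    p • !![a, b; c, d] + (1 - p) • (σz * !![a, b; c, d] * σz) =
      !![a, (2 * p - 1) * b; (2 * p - 1) * c, d] := by
  rw [σz_mul_mul_σz, smul_of, smul_of]
  ext i j
  fin_cases i <;> fin_cases j <;> simp <;> ring

lemma ρA_eq (α₀ β₀ : ℂ) (t : ℝ) : ρA α₀ β₀ t =
    !![((‖α₀‖ ^ 2 + Real.sin t ^ 2 * ‖β₀‖ ^ 2 : ℝ) : ℂ), α₀ * conj ((Real.cos t : ℂ) * β₀);
       conj α₀ * ((Real.cos t : ℂ) * β₀), ((Real.cos t ^ 2 * ‖β₀‖ ^ 2 : ℝ) : ℂ)] := by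
  ext i j
  fin_cases i <;> fin_cases j <;>
    simp [ρA, ρ, ψ, vecMulVec_apply, Fin.sum_univ_two, -ofReal_sin, -ofReal_cos, ← mul_conj']
  all_goals first | ring1 | linear_combination (-(Real.sin t : ℂ) ^ 2 * β₀ * conj β₀) * I_sq

theorem iconcurrence_sq_phase_flip_general (α₀ β₀ : ℂ) (t : ℝ) (p : ℝ) :
    (2 : ℂ) * (1 -
      (((p : ℂ) • ρA α₀ β₀ t + ((1 - p : ℝ) : ℂ) • (σz * ρA α₀ β₀ t * σz)) *
       ((p : ℂ) • ρA α₀ β₀ t + ((1 - p : ℝ) : ℂ) • (σz * ρA α₀ β₀ t * σz))).trace) =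
    ((2 - 4 * (1 - 2 * p) ^ 2 * ‖α₀‖ ^ 2 * Real.cos t ^ 2 * ‖β₀‖ ^ 2
        - 2 * (‖α₀‖ ^ 2 + Real.sin t ^ 2 * ‖β₀‖ ^ 2) ^ 2
        - 2 * Real.cos t ^ 4 * ‖β₀‖ ^ 4 : ℝ) : ℂ) := by
  have coherence : α₀ * conj ((Real.cos t : ℂ) * β₀) * (conj α₀ * ((Real.cos t : ℂ) * β₀)) =
      ((‖α₀‖ ^ 2 * Real.cos t ^ 2 * ‖β₀‖ ^ 2 : ℝ) : ℂ) := by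
    simp only [map_mul, conj_ofReal, ofReal_mul, ofReal_pow, ← mul_conj']
    ring
  rw [ofReal_sub, ofReal_one, ρA_eq, phase_flip_fin_two, trace_mul_self_fin_two,
    mul_mul_mul_comm, coherence]
  push_cast
  ring

/-- Squared I-Concurrence of the switch state under Phase Flip noise on the first
qubit: with ρ'_A = p·ρ_A + (1−p)·σ_z ρ_A σ_z, one has
2(1 − tr(ρ'_A²)) = 2 − 4(1−2p)²|α₀|²cos²(t)|β₀|² − 2(|α₀|² + sin²(t)|β₀|²)²
− 2cos⁴(t)|β₀|⁴. -/
theorem iconcurrence_sq_phase_flip (α₀ β₀ : ℂ) (t : ℝ) (p : ℝ)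
    (hnorm : ‖α₀‖ ^ 2 + ‖β₀‖ ^ 2 = 1)
    (hp₀ : 0 ≤ p) (hp₁ : p ≤ 1) :
    (2 : ℂ) * (1 -
      (((p : ℂ) • ρA α₀ β₀ t + ((1 - p : ℝ) : ℂ) • (σz * ρA α₀ β₀ t * σz)) *
       ((p : ℂ) • ρA α₀ β₀ t + ((1 - p : ℝ) : ℂ) • (σz * ρA α₀ β₀ t * σz))).trace) =
    ((2 - 4 * (1 - 2 * p) ^ 2 * ‖α₀‖ ^ 2 * Real.cos t ^ 2 * ‖β₀‖ ^ 2
        - 2 * (‖α₀‖ ^ 2 + Real.sin t ^ 2 * ‖β₀‖ ^ 2) ^ 2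
        - 2 * Real.cos t ^ 4 * ‖β₀‖ ^ 4 : ℝ) : ℂ) :=
  iconcurrence_sq_phase_flip_general α₀ β₀ t p
end
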